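/- arXiv:hep-th/0210278 — 2 statements merged into one kernel-verified Lean document; each statement's English description precedes it below -/
import Mathlib

section
/- The curvature E_{αβγ,εδ} = (1/2)(∂_ε F_{αβγδ} - ∂_δ F_{αβγε}), where F_{αβγδ} = 3∂_{[α}T_{βγ]δ}, is invariant under the full gauge transformation δT_{αβγ} = ∂_α σ_{βγ} - ∂_β σ_{αγ} + ∂_α α_{βγ} - ∂_β α_{αγ} - 2∂_γ α_{αβ} for arbitrary smooth symmetric σ and antisymmetric α. -/
open scoped BigOperators

/-- Partial derivative in the μ-th coordinate direction on ℝ^D. -/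
noncomputable def pd {D : ℕ} (μ : Fin D) (f : (Fin D → ℝ) → ℝ) : (Fin D → ℝ) → ℝ :=
  fun x => fderiv ℝ f x (Pi.single μ 1)

/-- Weight-one antisymmetrization over three indices. -/
noncomputable def alt3 {D : ℕ} (f : Fin D → Fin D → Fin D → ℝ) (a b c : Fin D) : ℝ :=
  (1/6) * (f a b c - f b a c + f b c a - f c b a + f c a b - f a c b)

/-- Weight-one antisymmetrization over four indices. -/
noncomputable def alt4 {D : ℕ} (f : Fin D → Fin D → Fin D → Fin D → ℝ)
    (a b c d : Fin D) : ℝ :=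
  (1/24) * ∑ σ : Equiv.Perm (Fin 4),
    ((Equiv.Perm.sign σ : ℤ) : ℝ) *
      f (![a,b,c,d] (σ 0)) (![a,b,c,d] (σ 1)) (![a,b,c,d] (σ 2)) (![a,b,c,d] (σ 3))

/-- Minkowski metric (mostly plus) on ℝ^D; numerically equal to its inverse. -/
noncomputable def eta (D : ℕ) : Fin D → Fin D → ℝ := fun μ ν =>
  if μ = ν then (if (μ : ℕ) = 0 then -1 else 1) else 0

section helpers
variable {D : ℕ}

lemma pd_smooth {f : (Fin D → ℝ) → ℝ} (hf : ContDiff ℝ (⊤ : ℕ∞) f) (μ : Fin D) :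
    ContDiff ℝ (⊤ : ℕ∞) (pd μ f) := by
  have h : ContDiff ℝ (⊤ : ℕ∞) (fderiv ℝ f) := hf.fderiv_right (by simp)
  exact h.clm_apply contDiff_const

lemma pd_comm {f : (Fin D → ℝ) → ℝ} (hf : ContDiff ℝ (⊤ : ℕ∞) f) (μ ν : Fin D)
    (x : Fin D → ℝ) : pd μ (pd ν f) x = pd ν (pd μ f) x := by
  have hd : Differentiable ℝ f := hf.differentiable (by simp)
  have hf' : ContDiff ℝ (⊤ : ℕ∞) (fderiv ℝ f) := hf.fderiv_right (by simp)
  have hd' : DifferentiableAt ℝ (fderiv ℝ f) x := (hf'.differentiable (by simp)) x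
  have hsym : ∀ v w, fderiv ℝ (fderiv ℝ f) x v w = fderiv ℝ (fderiv ℝ f) x w v :=
    second_derivative_symmetric (fun y => (hd y).hasFDerivAt) hd'.hasFDerivAt
  have key : ∀ (ρ τ : Fin D), pd ρ (pd τ f) x
      = fderiv ℝ (fderiv ℝ f) x (Pi.single ρ 1) (Pi.single τ 1) := by
    intro ρ τ
    show fderiv ℝ (fun y => fderiv ℝ f y (Pi.single τ 1)) x (Pi.single ρ 1) = _
    rw [fderiv_clm_apply hd' (differentiableAt_const _)]
    simp
  rw [key, key, hsym]

lemma pd_comb5 {f1 f2 f3 f4 f5 : (Fin D → ℝ) → ℝ} {x : Fin D → ℝ} (μ : Fin D)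
    (h1 : DifferentiableAt ℝ f1 x) (h2 : DifferentiableAt ℝ f2 x)
    (h3 : DifferentiableAt ℝ f3 x) (h4 : DifferentiableAt ℝ f4 x)
    (h5 : DifferentiableAt ℝ f5 x) :
    pd μ (fun y => f1 y - f2 y + f3 y - f4 y - 2 * f5 y) x
      = pd μ f1 x - pd μ f2 x + pd μ f3 x - pd μ f4 x - 2 * pd μ f5 x := by
  have H : HasFDerivAt (fun y => f1 y - f2 y + f3 y - f4 y - 2 * f5 y)
      (fderiv ℝ f1 x - fderiv ℝ f2 x + fderiv ℝ f3 x - fderiv ℝ f4 x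
        - (2:ℝ) • fderiv ℝ f5 x) x :=
    (((h1.hasFDerivAt.sub h2.hasFDerivAt).add h3.hasFDerivAt).sub h4.hasFDerivAt).sub
      (h5.hasFDerivAt.const_mul 2)
  simp [pd, H.fderiv, smul_eq_mul]

lemma pd_comb3 {f1 f2 f3 : (Fin D → ℝ) → ℝ} {x : Fin D → ℝ} (μ : Fin D)
    (h1 : DifferentiableAt ℝ f1 x) (h2 : DifferentiableAt ℝ f2 x)
    (h3 : DifferentiableAt ℝ f3 x) :
    pd μ (fun y => -2 * (f1 y + f2 y + f3 y)) x
      = -2 * (pd μ f1 x + pd μ f2 x + pd μ f3 x) := by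
  have H : HasFDerivAt (fun y => (-2:ℝ) * (f1 y + f2 y + f3 y))
      ((-2:ℝ) • (fderiv ℝ f1 x + fderiv ℝ f2 x + fderiv ℝ f3 x)) x :=
    (((h1.hasFDerivAt.add h2.hasFDerivAt).add h3.hasFDerivAt)).const_mul (-2)
  simp only [pd]
  rw [H.fderiv]
  simp [smul_eq_mul]
  ring

end helpers

theorem curvature_invariant_under_full_gauge_transformation
    {D : ℕ} (σ : (Fin D → ℝ) → Fin D → Fin D → ℝ)
    (a : (Fin D → ℝ) → Fin D → Fin D → ℝ)
    (hσsmooth : ∀ α β, ContDiff ℝ (⊤ : ℕ∞) (fun x => σ x α β))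
    (hasmooth : ∀ α β, ContDiff ℝ (⊤ : ℕ∞) (fun x => a x α β))
    (hσsym : ∀ x α β, σ x α β = σ x β α)
    (haanti : ∀ x α β, a x α β = - a x β α)
    (δT : (Fin D → ℝ) → Fin D → Fin D → Fin D → ℝ)
    (hδT : ∀ x α β γ, δT x α β γ =
      pd α (fun y => σ y β γ) x - pd β (fun y => σ y α γ) x
        + pd α (fun y => a y β γ) x - pd β (fun y => a y α γ) x
        - 2 * pd γ (fun y => a y α β) x)
    (δF : (Fin D → ℝ) → Fin D → Fin D → Fin D → Fin D → ℝ)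
    (hδF : ∀ x α β γ δ, δF x α β γ δ =
      pd α (fun y => δT y β γ δ) x + pd β (fun y => δT y γ α δ) x
        + pd γ (fun y => δT y α β δ) x)
    (δE : (Fin D → ℝ) → Fin D → Fin D → Fin D → Fin D → Fin D → ℝ)
    (hδE : ∀ x α β γ ε δ, δE x α β γ ε δ =
      (1/2) * (pd ε (fun y => δF y α β γ δ) x - pd δ (fun y => δF y α β γ ε) x)) :
    ∀ x α β γ ε δ, δE x α β γ ε δ = 0 := by
  -- the "potential" for δF : δF_{αβγδ} = ∂_δ G_{αβγ}
  set G : Fin D → Fin D → Fin D → (Fin D → ℝ) → ℝ := fun α β γ => fun y =>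
    -2 * (pd α (fun z => a z β γ) y + pd β (fun z => a z γ α) y
      + pd γ (fun z => a z α β) y) with hGdef
  have hG : ∀ α β γ, ContDiff ℝ (⊤ : ℕ∞) (G α β γ) := by
    intro α β γ
    exact contDiff_const.mul (((pd_smooth (hasmooth β γ) α).add
      (pd_smooth (hasmooth γ α) β)).add (pd_smooth (hasmooth α β) γ))
  have dσ : ∀ (μ ρ τ : Fin D), Differentiable ℝ (pd μ (fun y => σ y ρ τ)) :=
    fun μ ρ τ => (pd_smooth (hσsmooth ρ τ) μ).differentiable (by simp)
  have da : ∀ (μ ρ τ : Fin D), Differentiable ℝ (pd μ (fun y => a y ρ τ)) :=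
    fun μ ρ τ => (pd_smooth (hasmooth ρ τ) μ).differentiable (by simp)
  have hFG : ∀ x α β γ δ, δF x α β γ δ = pd δ (G α β γ) x := by
    intro x α β γ δ
    rw [hδF]
    have e1 : (fun y => δT y β γ δ) = fun y =>
        pd β (fun z => σ z γ δ) y - pd γ (fun z => σ z β δ) y
          + pd β (fun z => a z γ δ) y - pd γ (fun z => a z β δ) y
          - 2 * pd δ (fun z => a z β γ) y := funext fun y => hδT y β γ δ
    have e2 : (fun y => δT y γ α δ) = fun y =>
        pd γ (fun z => σ z α δ) y - pd α (fun z => σ z γ δ) y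
          + pd γ (fun z => a z α δ) y - pd α (fun z => a z γ δ) y
          - 2 * pd δ (fun z => a z γ α) y := funext fun y => hδT y γ α δ
    have e3 : (fun y => δT y α β δ) = fun y =>
        pd α (fun z => σ z β δ) y - pd β (fun z => σ z α δ) y
          + pd α (fun z => a z β δ) y - pd β (fun z => a z α δ) y
          - 2 * pd δ (fun z => a z α β) y := funext fun y => hδT y α β δ
    rw [e1, e2, e3]
    rw [pd_comb5 α (dσ β γ δ x) (dσ γ β δ x) (da β γ δ x) (da γ β δ x) (da δ β γ x)]
    rw [pd_comb5 β (dσ γ α δ x) (dσ α γ δ x) (da γ α δ x) (da α γ δ x) (da δ γ α x)]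
    rw [pd_comb5 γ (dσ α β δ x) (dσ β α δ x) (da α β δ x) (da β α δ x) (da δ α β x)]
    rw [hGdef]
    rw [pd_comb3 δ (da α β γ x) (da β γ α x) (da γ α β x)]
    rw [pd_comm (hσsmooth γ δ) β α x, pd_comm (hσsmooth β δ) γ α x,
        pd_comm (hσsmooth α δ) γ β x,
        pd_comm (hasmooth γ δ) β α x, pd_comm (hasmooth β δ) γ α x,
        pd_comm (hasmooth α δ) γ β x,
        pd_comm (hasmooth β γ) δ α x, pd_comm (hasmooth γ α) δ β x,
        pd_comm (hasmooth α β) δ γ x]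
    ring
  intro x α β γ ε δ
  rw [hδE]
  have f1 : (fun y => δF y α β γ δ) = pd δ (G α β γ) := funext fun y => hFG y α β γ δ
  have f2 : (fun y => δF y α β γ ε) = pd ε (G α β γ) := funext fun y => hFG y α β γ ε
  rw [f1, f2, pd_comm (hG α β γ) ε δ x]
  ring
end

section
/- The curvature E satisfies the algebraic Bianchi identity: the antisymmetrization of E_{αβγ,εδ} over the four indices α, β, γ, ε vanishes, i.e. E_{[αβγ,ε]δ} = 0, provided T has the cyclic symmetry T_{[αβγ]} = 0. -/
open scoped BigOperators

/-!
Write `H μ ν β γ δ = ∂_μ ∂_ν T_{βγδ}`. It is symmetric in `μ ν` (Schwarz), and its cyclic sum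
over `β γ δ` vanishes, since for `T` antisymmetric in its first two slots `T_{[βγδ]}` is a third
of that cyclic sum. Expanding `F`, `2 E_{αβγ,εδ}` is the sum over the cyclic permutations of
`α β γ` of `H ε α β γ δ - H δ α β γ ε`. Antisymmetrizing over `α β γ ε`, the three cyclic
permutations contribute equally; the first term dies because it is symmetric in `ε α`, the
second because its cyclic sum over `β γ ε` vanishes.
-/

section PartialDerivative

variable {D : ℕ} {f g h : (Fin D → ℝ) → ℝ} (μ ν : Fin D)

theorem ContDiff.pd {n : WithTop ℕ∞} (hf : ContDiff ℝ (n + 1) f) : ContDiff ℝ n (pd μ f) :=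
  (hf.fderiv_right le_rfl).clm_apply contDiff_const

theorem pd_zero : pd μ (0 : (Fin D → ℝ) → ℝ) = 0 := by
  ext x
  simp [pd]

theorem pd_add (hf : Differentiable ℝ f) (hg : Differentiable ℝ g) :
    pd μ (f + g) = pd μ f + pd μ g := by
  ext x
  simp [pd, fderiv_add (hf x) (hg x)]

theorem pd_add_add (hf : Differentiable ℝ f) (hg : Differentiable ℝ g)
    (hh : Differentiable ℝ h) : pd μ (f + g + h) = pd μ f + pd μ g + pd μ h := by
  rw [pd_add μ (hf.add hg) hh, pd_add μ hf hg]

theorem pd_pd_add_add (hf : ContDiff ℝ 2 f) (hg : ContDiff ℝ 2 g) (hh : ContDiff ℝ 2 h) :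
    pd μ (pd ν (f + g + h)) = pd μ (pd ν f) + pd μ (pd ν g) + pd μ (pd ν h) := by
  have hdiff : ∀ {u : (Fin D → ℝ) → ℝ}, ContDiff ℝ 2 u → Differentiable ℝ (pd ν u) :=
    fun hu => (hu.pd ν).differentiable one_ne_zero
  rw [pd_add_add ν (hf.differentiable two_ne_zero) (hg.differentiable two_ne_zero)
    (hh.differentiable two_ne_zero), pd_add_add μ (hdiff hf) (hdiff hg) (hdiff hh)]

theorem pd_pd_comm (hf : ContDiff ℝ 2 f) (x : Fin D → ℝ) :
    pd μ (pd ν f) x = pd ν (pd μ f) x := by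
  have hsymm : IsSymmSndFDerivAt ℝ f x :=
    hf.contDiffAt.isSymmSndFDerivAt (by simp [minSmoothness_of_isRCLikeNormedField])
  have hdf : DifferentiableAt ℝ (fderiv ℝ f) x :=
    ((hf.fderiv_right le_rfl).differentiable one_ne_zero) x
  have hsecond : ∀ v w, fderiv ℝ (fun y => fderiv ℝ f y v) x w = fderiv ℝ (fderiv ℝ f) x w v :=
    fun v w => by simp [fderiv_clm_apply hdf (differentiableAt_const v)]
  unfold pd
  rw [hsecond, hsecond]
  exact hsymm _ _

end PartialDerivative

theorem alt3_eq_of_antisymm {D : ℕ} {t : Fin D → Fin D → Fin D → ℝ}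
    (ht : ∀ a b c, t a b c = -t b a c) (a b c : Fin D) :
    alt3 t a b c = (t a b c + t b c a + t c a b) / 3 := by
  simp only [alt3, ht b a c, ht c b a, ht a c b]
  ring

section Alt4

variable {D : ℕ} (f g : Fin D → Fin D → Fin D → Fin D → ℝ) {a b c d : Fin D}

theorem alt4_comp_perm (τ : Equiv.Perm (Fin 4)) (i j k l : Fin 4) (hτ : ⇑τ = ![i, j, k, l]) :
    alt4 (fun p q r s => f (![p,q,r,s] i) (![p,q,r,s] j) (![p,q,r,s] k) (![p,q,r,s] l)) a b c d
      = (Equiv.Perm.sign τ : ℝ) * alt4 f a b c d := by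
  obtain ⟨rfl, rfl, rfl, rfl⟩ : τ 0 = i ∧ τ 1 = j ∧ τ 2 = k ∧ τ 3 = l := by simp [hτ]
  have hv : ∀ (σ : Equiv.Perm (Fin 4)) (i : Fin 4),
      ![![a,b,c,d] (σ 0), ![a,b,c,d] (σ 1), ![a,b,c,d] (σ 2), ![a,b,c,d] (σ 3)] i
        = ![a,b,c,d] (σ i) := by
    intro σ i; fin_cases i <;> rfl
  simp only [alt4, hv, Finset.mul_sum, ← mul_assoc, mul_left_comm _ (1 / 24 : ℝ)]
  refine Fintype.sum_equiv (Equiv.mulRight τ) _ _ fun σ => ?_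
  simp only [Equiv.coe_mulRight, Equiv.Perm.mul_apply, Equiv.Perm.sign_mul, Units.val_mul,
    Int.cast_mul]
  rcases Int.units_eq_one_or (Equiv.Perm.sign τ) with h | h <;> simp [h]

theorem alt4_swap03 : alt4 (fun p q r s => f s q r p) a b c d = -alt4 f a b c d := by
  simpa [show Equiv.Perm.sign (Equiv.swap (0 : Fin 4) 3) = -1 by decide] using
    alt4_comp_perm f (Equiv.swap 0 3) 3 1 2 0 (by decide)

theorem alt4_rotate012 : alt4 (fun p q r s => f q r p s) a b c d = alt4 f a b c d := by
  simpa [show Equiv.Perm.sign (c[0, 1, 2] : Equiv.Perm (Fin 4)) = 1 by decide] using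
    alt4_comp_perm f c[0, 1, 2] 1 2 0 3 (by decide)

theorem alt4_rotate123 : alt4 (fun p q r s => f p r s q) a b c d = alt4 f a b c d := by
  simpa [show Equiv.Perm.sign (c[1, 2, 3] : Equiv.Perm (Fin 4)) = 1 by decide] using
    alt4_comp_perm f c[1, 2, 3] 0 2 3 1 (by decide)

theorem alt4_add :
    alt4 (fun p q r s => f p q r s + g p q r s) a b c d = alt4 f a b c d + alt4 g a b c d := by
  simp only [alt4, mul_add, Finset.sum_add_distrib]

theorem alt4_sub :
    alt4 (fun p q r s => f p q r s - g p q r s) a b c d = alt4 f a b c d - alt4 g a b c d := by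
  simp only [alt4, mul_sub, Finset.sum_sub_distrib]

theorem alt4_const_mul (u : ℝ) :
    alt4 (fun p q r s => u * f p q r s) a b c d = u * alt4 f a b c d := by
  simp only [alt4, Finset.mul_sum]
  congr 1; ext σ; ring

theorem alt4_rotate012_sum :
    alt4 (fun p q r s => f p q r s + f q r p s + f r p q s) a b c d = 3 * alt4 f a b c d := by
  rw [alt4_add, alt4_add, alt4_rotate012, alt4_rotate012 (fun p q r s => f q r p s)]
  ring

theorem alt4_eq_zero_of_symm03 (hf : ∀ p q r s, f s q r p = f p q r s) :
    alt4 f a b c d = 0 := by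
  have := alt4_swap03 f (a := a) (b := b) (c := c) (d := d)
  simp only [hf] at this
  linarith

theorem alt4_eq_zero_of_rotate123_sum (hf : ∀ p q r s, f p q r s + f p r s q + f p s q r = 0) :
    alt4 f a b c d = 0 := by
  have h : 3 * alt4 f a b c d = 0 := calc
    3 * alt4 f a b c d = alt4 (fun p q r s => f p q r s + f p r s q + f p s q r) a b c d := by
      rw [alt4_add, alt4_add, alt4_rotate123, alt4_rotate123 (fun p q r s => f p r s q)]
      ring
    _ = 0 := by simp only [hf, alt4, mul_zero, Finset.sum_const_zero]
  linarith

theorem alt4_curvature_eq_zero (H : Fin D → Fin D → Fin D → Fin D → Fin D → ℝ) (δ : Fin D)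
    (hsymm : ∀ μ ν b c d, H μ ν b c d = H ν μ b c d)
    (hcyclic : ∀ μ ν b c d, H μ ν b c d + H μ ν c d b + H μ ν d b c = 0) :
    alt4 (fun i j k l => (1 / 2) * ((H l i j k δ + H l j k i δ + H l k i j δ)
      - (H δ i j k l + H δ j k i l + H δ k i j l))) a b c d = 0 := by
  rw [alt4_const_mul, alt4_sub, alt4_rotate012_sum (fun i j k l => H l i j k δ),
    alt4_rotate012_sum (fun i j k l => H δ i j k l),
    alt4_eq_zero_of_symm03 _ fun p q r s => hsymm p s q r δ,
    alt4_eq_zero_of_rotate123_sum _ fun p q r s => hcyclic δ p q r s]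
  ring

end Alt4

theorem curvature_algebraic_bianchi_identity
    {D : ℕ} (T : (Fin D → ℝ) → Fin D → Fin D → Fin D → ℝ)
    (hTsmooth : ∀ α β γ, ContDiff ℝ (⊤ : ℕ∞) (fun x => T x α β γ))
    (hTanti : ∀ x α β γ, T x α β γ = - T x β α γ)
    (hTalt : ∀ x α β γ, alt3 (T x) α β γ = 0)
    (F : (Fin D → ℝ) → Fin D → Fin D → Fin D → Fin D → ℝ)
    (hF : ∀ x α β γ δ, F x α β γ δ =
      pd α (fun y => T y β γ δ) x + pd β (fun y => T y γ α δ) x + pd γ (fun y => T y α β δ) x)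
    (E : (Fin D → ℝ) → Fin D → Fin D → Fin D → Fin D → Fin D → ℝ)
    (hE : ∀ x α β γ ε δ, E x α β γ ε δ =
      (1/2) * (pd ε (fun y => F y α β γ δ) x - pd δ (fun y => F y α β γ ε) x)) :
    ∀ x α β γ ε δ, alt4 (fun i j k l => E x i j k l δ) α β γ ε = 0 := by
  intro x α β γ ε δ
  set t : Fin D → Fin D → Fin D → (Fin D → ℝ) → ℝ := fun b c d y => T y b c d
  have ht : ∀ b c d, ContDiff ℝ 2 (t b c d) := fun b c d => (hTsmooth b c d).of_le (by norm_cast)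
  have ht_cyclic : ∀ b c d, t b c d + t c d b + t d b c = 0 := fun b c d => funext fun y => by
    simpa [t, alt3_eq_of_antisymm (hTanti y)] using hTalt y b c d
  set H := fun μ ν b c d => pd μ (pd ν (t b c d)) x
  have hH_cyclic : ∀ μ ν b c d, H μ ν b c d + H μ ν c d b + H μ ν d b c = 0 := fun μ ν b c d =>
    calc H μ ν b c d + H μ ν c d b + H μ ν d b c
        = pd μ (pd ν (t b c d + t c d b + t d b c)) x := by
          rw [pd_pd_add_add μ ν (ht b c d) (ht c d b) (ht d b c)]; rfl
      _ = 0 := by rw [ht_cyclic, pd_zero, pd_zero]; rfl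
  have hF_deriv : ∀ ρ i j k m,
      pd ρ (fun y => F y i j k m) x = H ρ i j k m + H ρ j k i m + H ρ k i j m := by
    intro ρ i j k m
    have hdiff : ∀ ν b c d, Differentiable ℝ (pd ν (t b c d)) :=
      fun ν b c d => ((ht b c d).pd ν).differentiable one_ne_zero
    rw [show (fun y => F y i j k m) = pd i (t j k m) + pd j (t k i m) + pd k (t i j m) from
      funext fun y => hF y i j k m, pd_add_add ρ (hdiff _ _ _ _) (hdiff _ _ _ _) (hdiff _ _ _ _)]
    rfl
  have hEH : (fun i j k l => E x i j k l δ) = fun i j k l => (1 / 2) *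
      ((H l i j k δ + H l j k i δ + H l k i j δ) - (H δ i j k l + H δ j k i l + H δ k i j l)) := by
    funext i j k l
    rw [hE, hF_deriv, hF_deriv]
  rw [hEH]
  exact alt4_curvature_eq_zero H δ (fun μ ν b c d => pd_pd_comm μ ν (ht b c d) x) hH_cyclic
end
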